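/- Consider a finite nonempty list of rank-labeled trees whose total number of nodes is n (n ≥ 1), such that each integer occurs at most twice among the ranks of the roots of the trees. Then the number of trees in the list is at most 2·(log_φ(n) + 3), where φ = (1 + √5)/2 is the golden ratio and log_φ denotes the logarithm to base φ. -/

import Mathlib

/-- `cdiv2 m` is the ceiling of `m / 2` for an integer `m`. -/
def cdiv2 (m : ℤ) : ℤ := ⌈(m : ℚ) / 2⌉

/-- A rooted tree in which every node carries an integer rank and an
ordered finite list of child subtrees. -/
inductive RTree : Type
  | node : ℤ → List RTree → RTree

/-- The rank of the root of a tree. -/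
def RTree.rank : RTree → ℤ
  | .node r _ => r

mutual
  /-- The size of a tree: its total number of nodes. -/
  def RTree.size : RTree → ℕ
    | .node _ cs => 1 + RTree.sizeList cs
  /-- The total number of nodes of a list of trees. -/
  def RTree.sizeList : List RTree → ℕ
    | [] => 0
    | t :: ts => RTree.size t + RTree.sizeList ts
end

/-- The rank of the `(i+1)`-st child from the end of the child list `cs`
(so `i = 0` gives the last child, `i = 1` the second to last), with the
convention that the rank of a missing child is `-1`. -/
def lastRank (cs : List RTree) (i : ℕ) : ℤ :=
  (cs.reverse[i]?).elim (-1) RTree.rank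

/-- A rank-labeled tree: every node `z` satisfies `r_z ≥ 0` and
`r_z ≤ ⌈(r_{z1} + r_{z2})/2⌉ + 1` where `r_{z1}`, `r_{z2}` are the ranks of the
last two children (a missing child having rank `-1`). -/
inductive RTree.Valid : RTree → Prop
  | node (r : ℤ) (cs : List RTree)
      (hr : 0 ≤ r)
      (hrank : r ≤ cdiv2 (lastRank cs 0 + lastRank cs 1) + 1)
      (hcs : ∀ t ∈ cs, RTree.Valid t) :
      RTree.Valid (RTree.node r cs)


/-! A rank-labeled tree of rank `r` has at least `φ ^ (r - 2)` nodes: the rank condition forces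
the last two children to have ranks `a, b` with `2 r - 3 ≤ a + b`, and then
`φ ^ r ≤ φ ^ a + φ ^ b` because `φ ^ r = φ ^ (r - 1) + φ ^ (r - 2)`. Hence every root rank lies in
`[0, log_φ n + 2]`, and since each rank occurs at most twice there are at most
`2 (log_φ n + 3)` trees. -/

open Real
open scoped goldenRatio

lemma List.length_le_mul_card_of_count_le {α : Type*} [DecidableEq α] {l : List α}
    {s : Finset α} {k : ℕ} (hl : ∀ x ∈ l, x ∈ s) (hc : ∀ x ∈ s, l.count x ≤ k) :
    l.length ≤ k * s.card := by
  have hsum := Multiset.sum_count_eq_card (m := (l : Multiset α)) (by simpa using hl)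
  simp only [Multiset.coe_count, Multiset.coe_card] at hsum
  calc l.length = ∑ x ∈ s, l.count x := hsum.symm
    _ ≤ ∑ _x ∈ s, k := Finset.sum_le_sum hc
    _ = k * s.card := by rw [Finset.sum_const, smul_eq_mul, mul_comm]

lemma goldenRatio_zpow_eq_add (r : ℤ) : φ ^ r = φ ^ (r - 1) + φ ^ (r - 2) := by
  have h : φ ^ r = φ ^ (r - 2) * φ ^ 2 := by
    rw [← zpow_natCast, ← zpow_add₀ goldenRatio_ne_zero]; ring_nf
  rw [h, goldenRatio_sq, mul_add, mul_one, ← zpow_add_one₀ goldenRatio_ne_zero]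
  ring_nf

lemma goldenRatio_zpow_le_add {a b r : ℤ} (h : 2 * r - 3 ≤ a + b) : φ ^ r ≤ φ ^ a + φ ^ b := by
  wlog hab : a ≤ b generalizing a b
  · rw [add_comm]; exact this (by omega) (by omega)
  have hmono {m k : ℤ} (hmk : m ≤ k) : φ ^ m ≤ φ ^ k :=
    zpow_le_zpow_right₀ one_lt_goldenRatio.le hmk
  by_cases hrb : r ≤ b
  · linarith [hmono hrb, zpow_pos goldenRatio_pos a]
  · rw [goldenRatio_zpow_eq_add r]
    linarith [hmono (show r - 2 ≤ a by omega), hmono (show r - 1 ≤ b by omega)]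

lemma goldenRatio_zpow_neg_three_le : φ ^ (-3 : ℤ) ≤ 1 / 2 := by
  rw [zpow_neg, zpow_ofNat, inv_le_comm₀ (by positivity) (by norm_num)]
  nlinarith [goldenRatio_sq, one_lt_goldenRatio]

lemma two_mul_cdiv2_le (m : ℤ) : 2 * cdiv2 m ≤ m + 1 := by
  have h : (cdiv2 m : ℚ) < m / 2 + 1 := Int.ceil_lt_add_one _
  have : 2 * cdiv2 m < m + 2 := by exact_mod_cast (by linarith : (2 * cdiv2 m : ℚ) < m + 2)
  omega

@[simp]
lemma lastRank_nil (i : ℕ) : lastRank [] i = -1 := rfl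

@[simp]
lemma lastRank_append_singleton_zero (cs : List RTree) (t : RTree) :
    lastRank (cs ++ [t]) 0 = t.rank := by
  simp [lastRank]

@[simp]
lemma lastRank_append_singleton_succ (cs : List RTree) (t : RTree) (i : ℕ) :
    lastRank (cs ++ [t]) (i + 1) = lastRank cs i := by
  simp [lastRank]

namespace RTree

@[simp]
lemma sizeList_nil : sizeList [] = 0 := rfl

@[simp]
lemma sizeList_append (cs ds : List RTree) : sizeList (cs ++ ds) = sizeList cs + sizeList ds := by
  induction cs with
  | nil => simp [sizeList]
  | cons t cs ih => simp [sizeList, ih, Nat.add_assoc]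

@[simp]
lemma sizeList_singleton (t : RTree) : sizeList [t] = t.size := by
  simp [sizeList]

lemma Valid.rank_nonneg {t : RTree} (ht : t.Valid) : 0 ≤ t.rank := by
  cases ht with
  | node _ _ hr _ _ => exact hr

section LastChildren

variable {cs : List RTree} (h : ∀ t ∈ cs, φ ^ (t.rank - 2) ≤ t.size)
include h

/- A missing child has rank `-1`, so it contributes `φ ^ (-3) ≤ 1 / 2` in place of a size. -/
lemma goldenRatio_zpow_lastRank_zero_le : φ ^ (lastRank cs 0 - 2) ≤ 1 / 2 + sizeList cs := by
  rcases cs.eq_nil_or_concat' with rfl | ⟨L, t, rfl⟩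
  · have := goldenRatio_zpow_neg_three_le
    norm_num at this ⊢
    linarith
  · have ht := h t (by simp)
    simp only [lastRank_append_singleton_zero, sizeList_append, sizeList_singleton, Nat.cast_add]
    linarith [(Nat.cast_nonneg (sizeList L) : (0 : ℝ) ≤ _)]

lemma goldenRatio_zpow_lastRank_add_le :
    φ ^ (lastRank cs 0 - 2) + φ ^ (lastRank cs 1 - 2) ≤ 1 + sizeList cs := by
  rcases cs.eq_nil_or_concat' with rfl | ⟨L, t, rfl⟩
  · have := goldenRatio_zpow_neg_three_le
    norm_num at this ⊢
    linarith
  · have ht := h t (by simp)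
    have hL := goldenRatio_zpow_lastRank_zero_le (cs := L) (fun u hu => h u (by simp [hu]))
    simp only [lastRank_append_singleton_zero, lastRank_append_singleton_succ, sizeList_append,
      sizeList_singleton, Nat.cast_add]
    linarith

end LastChildren

lemma Valid.goldenRatio_zpow_le_size {t : RTree} (ht : t.Valid) : φ ^ (t.rank - 2) ≤ t.size := by
  induction ht with
  | node r cs _ hrank _ ih =>
    have hlast : 2 * (r - 2) - 3 ≤ (lastRank cs 0 - 2) + (lastRank cs 1 - 2) := by
      have := two_mul_cdiv2_le (lastRank cs 0 + lastRank cs 1)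
      omega
    calc φ ^ (r - 2) ≤ φ ^ (lastRank cs 0 - 2) + φ ^ (lastRank cs 1 - 2) :=
          goldenRatio_zpow_le_add hlast
      _ ≤ 1 + sizeList cs := goldenRatio_zpow_lastRank_add_le ih
      _ = (RTree.node r cs).size := by simp [RTree.size]

lemma Valid.rank_le_floor_logb_add_two {t : RTree} (ht : t.Valid) {n : ℕ} (hn : t.size ≤ n) :
    t.rank ≤ ⌊logb φ n⌋₊ + 2 := by
  have hsize : φ ^ ((t.rank - 2 : ℤ) : ℝ) ≤ n := by
    rw [rpow_intCast]; exact ht.goldenRatio_zpow_le_size.trans (by exact_mod_cast hn)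
  have hlogb : ((t.rank - 2 : ℤ) : ℝ) < ⌊logb φ n⌋₊ + 1 :=
    ((le_logb_iff_rpow_le one_lt_goldenRatio ((by positivity : (0 : ℝ) < _).trans_le hsize)).2
      hsize).trans_lt (Nat.lt_floor_add_one _)
  have : t.rank - 2 < ⌊logb φ n⌋₊ + 1 := by exact_mod_cast hlogb
  omega

end RTree

/-- A nonempty list of rank-labeled trees with `n` nodes in total, in which each
integer occurs at most twice among the root ranks, has at most
`2 * (log_φ n + 3)` trees. -/
theorem num_trees_le_log (ts : List RTree) (n : ℕ) (hne : ts ≠ [])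
    (hv : ∀ t ∈ ts, t.Valid)
    (hn : (ts.map RTree.size).sum = n)
    (hc : ∀ r : ℤ, (ts.map RTree.rank).count r ≤ 2) :
    (ts.length : ℝ) ≤ 2 * (Real.logb ((1 + Real.sqrt 5) / 2) (n : ℝ) + 3) := by
  set K := ⌊logb φ n⌋₊
  have hrank : ∀ r ∈ ts.map RTree.rank, r ∈ Finset.Icc (0 : ℤ) (K + 2) := by
    simp only [List.mem_map, Finset.mem_Icc]
    rintro _ ⟨t, ht, rfl⟩
    exact ⟨(hv t ht).rank_nonneg, (hv t ht).rank_le_floor_logb_add_two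
      (hn ▸ List.le_sum_of_mem (List.mem_map_of_mem ht))⟩
  have hlen : ts.length ≤ 2 * (K + 3) := by
    have := List.length_le_mul_card_of_count_le hrank (fun r _ => hc r)
    simp only [List.length_map, Int.card_Icc] at this
    omega
  have hK : (K : ℝ) ≤ logb φ n :=
    Nat.floor_le (div_nonneg (log_natCast_nonneg n) (log_nonneg one_lt_goldenRatio.le))
  calc (ts.length : ℝ) ≤ 2 * (K + 3) := by exact_mod_cast hlen
    _ ≤ 2 * (logb φ n + 3) := by linarith
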